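/- arXiv:1207.4268 — 2 statements merged into one kernel-verified Lean document; each statement's English description precedes it below -/
import Mathlib

section
/- With F((a,t),(a',t'), ⊥) evaluated at lead 0, the induced one-step distance between implementation labels with equal discrete symbols is |t − t'|, and the recursively defined trace distance d_T = g ∘ h_T on finite traces σ = (a_0,x_0)...(a_n,x_n) and σ' = (a_0,x_0')...(a_n,x_n') (same discrete labels) equals the maximum-lead distance max_{0≤m≤n} |Σ_{i=0}^m x_i − Σ_{i=0}^m x_i'|. -/
def LL : Type := ℝ → ENNReal

noncomputable instance : CompleteLattice LL := Pi.instCompleteLattice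

noncomputable def F {Alph : Type} [DecidableEq Alph] (k l : Alph × NNReal) (α : LL) : LL :=
  if k.1 = l.1 then
    fun d => max (ENNReal.ofReal |d + (k.2 : ℝ) - (l.2 : ℝ)|) (α (d + (k.2 : ℝ) - (l.2 : ℝ)))
  else ⊤

/-- The recursively defined trace distance lift `h_T` on finite traces. -/
noncomputable def hT {Alph : Type} [DecidableEq Alph] :
    List (Alph × NNReal) → List (Alph × NNReal) → LL
  | [], [] => ⊥
  | k :: σ, l :: τ => F k l (hT σ τ)
  | _, _ => ⊤

/-- `g` evaluates at lead `0`. -/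
noncomputable def g (α : LL) : ENNReal := α 0

/-! `h_T σ τ` evaluated at an initial lead `d` is the largest lead
`d + Σ_{i≤m} x_i - Σ_{i≤m} x'_i` reached along the two traces: one step of `F` shifts the lead
by `t - t'`, records its new value, and passes the shifted lead on to the rest of the traces.
Evaluating at `d = 0` gives the theorem. -/

theorem Finset.sup_range_add_one' {α : Type*} [SemilatticeSup α] [OrderBot α] (f : ℕ → α)
    (n : ℕ) : (range (n + 1)).sup f = f 0 ⊔ (range n).sup (fun m => f (m + 1)) := by
  rw [range_add_one', sup_insert, sup_map]
  rfl

section TraceDistance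

variable {Alph : Type} [DecidableEq Alph]

theorem F_apply_of_fst_eq {k l : Alph × NNReal} (h : k.1 = l.1) (α : LL) (d : ℝ) :
    F k l α d =
      max (ENNReal.ofReal |d + (k.2 : ℝ) - (l.2 : ℝ)|) (α (d + (k.2 : ℝ) - (l.2 : ℝ))) := by
  simp [F, h]

theorem hT_apply :
    ∀ σ τ : List (Alph × NNReal), σ.map Prod.fst = τ.map Prod.fst → ∀ d : ℝ,
      hT σ τ d = (Finset.range σ.length).sup (fun m =>
        ENNReal.ofReal |d + ((σ.take (m + 1)).map (fun p => (p.2 : ℝ))).sum -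
          ((τ.take (m + 1)).map (fun p => (p.2 : ℝ))).sum|)
  | [], [], _, _ => rfl
  | k :: σ, l :: τ, h, d => by
    obtain ⟨hkl, hστ⟩ := List.cons_eq_cons.mp h
    rw [hT, F_apply_of_fst_eq hkl, hT_apply σ τ hστ, List.length_cons,
      Finset.sup_range_add_one']
    congr 1
    · simp
    · refine Finset.sup_congr rfl fun m _ => ?_
      simp only [List.take_succ_cons, List.map_cons, List.sum_cons]
      ring_nf

end TraceDistance

/-- The one-step distance between implementation labels with equal discrete symbols is
`|t − t'|`, and the trace distance `d_T = g ∘ h_T` on finite traces with identical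
discrete labels is exactly the maximum-lead distance
`max_{0 ≤ m ≤ n} |Σ_{i≤m} x_i − Σ_{i≤m} x_i'|`. -/
theorem dT_is_maximum_lead {Alph : Type} [DecidableEq Alph] :
    (∀ (a : Alph) (t t' : NNReal),
        g (F (a, t) (a, t') ⊥) = ENNReal.ofReal |(t : ℝ) - (t' : ℝ)|) ∧
    (∀ σ τ : List (Alph × NNReal), σ.map Prod.fst = τ.map Prod.fst →
        g (hT σ τ) =
          (Finset.range σ.length).sup (fun m =>
            ENNReal.ofReal |(((σ.take (m + 1)).map (fun p => (p.2 : ℝ))).sum) -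
              (((τ.take (m + 1)).map (fun p => (p.2 : ℝ))).sum)|)) := by
  refine ⟨fun a t t' => ?_, fun σ τ h => ?_⟩
  · rw [g, F_apply_of_fst_eq (k := (a, t)) (l := (a, t')) rfl, zero_add]
    exact max_eq_left bot_le
  · simp only [g, hT_apply σ τ h 0, zero_add]
end

section
/- Modal refinement implies thorough refinement for SMTS: if S ≤_m T, then every implementation of S is an implementation of T, i.e. ⟦S⟧ ⊆ ⟦T⟧. -/
/-- SMTS over a partially ordered label set, with the consistency condition. -/
structure SMTS (L : Type) [PartialOrder L] where
  State : Type
  init : State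
  may : State → L → State → Prop
  must : State → L → State → Prop
  consistent : ∀ s k s', must s k s' → ∃ l, may s l s' ∧ k ≤ l

/-- Implementation labels: minimal elements of the label order. -/
def isImpLabel {L : Type} [PartialOrder L] (k : L) : Prop := ∀ k' : L, k' ≤ k → k' = k

/-- An implementation: may and must transitions coincide and carry implementation
labels only. -/
def isImplementation {L : Type} [PartialOrder L] (I : SMTS L) : Prop :=
  (∀ s k s', I.may s k s' ↔ I.must s k s') ∧
  (∀ s k s', I.may s k s' → isImpLabel k)

/-- Modal refinement. -/
def refines {L : Type} [PartialOrder L] (S T : SMTS L) : Prop :=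
  ∃ R : S.State → T.State → Prop, R S.init T.init ∧
    ∀ s t, R s t →
      (∀ k s', S.may s k s' → ∃ l t', T.may t l t' ∧ k ≤ l ∧ R s' t') ∧
      (∀ l t', T.must t l t' → ∃ k s', S.must s k s' ∧ k ≤ l ∧ R s' t')

/-- Modal refinement implies thorough refinement: `S ≤_m T` implies `⟦S⟧ ⊆ ⟦T⟧`. -/
theorem modal_implies_thorough {L : Type} [PartialOrder L] (S T : SMTS L)
    (h : refines S T) :
    ∀ I : SMTS L, isImplementation I → refines I S → refines I T := by
  rintro I _ ⟨R1, h1init, h1⟩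
  obtain ⟨R2, h2init, h2⟩ := h
  refine ⟨fun i t => ∃ s, R1 i s ∧ R2 s t, ⟨S.init, h1init, h2init⟩, ?_⟩
  rintro i t ⟨s, his, hst⟩
  constructor
  · intro k i' hmay
    obtain ⟨l, s', hSmay, hkl, hR1⟩ := (h1 i s his).1 k i' hmay
    obtain ⟨m, t', hTmay, hlm, hR2⟩ := (h2 s t hst).1 l s' hSmay
    exact ⟨m, t', hTmay, le_trans hkl hlm, s', hR1, hR2⟩
  · intro l t' hmust
    obtain ⟨m, s', hSmust, hml, hR2⟩ := (h2 s t hst).2 l t' hmust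
    obtain ⟨k, i', hImust, hkm, hR1⟩ := (h1 i s his).2 m s' hSmust
    exact ⟨k, i', hImust, le_trans hkm hml, s', hR1, hR2⟩
end
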